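/- arXiv:1902.02112 — 6 statements merged into one kernel-verified Lean document; each statement's English description precedes it below -/
import Mathlib

section
/- Let ω : [0,∞) → [0,∞) be continuous, increasing, with ω|_{[0,1]} ≡ 0, φ(t) := ω(e^t) convex, and φ* its Young conjugate. Then for every natural number k ≥ 1 and every real t ≥ 1, inf_{j ∈ ℕ₀} t^{−j} e^{k φ*(j/k)} ≤ e^{−k ω(t) + log t}. -/
set_option maxHeartbeats 1000000


theorem stmt_1 (omg phis : ℝ → ℝ)
    (hcont : ContinuousOn omg (Set.Ici 0))
    (hmono : MonotoneOn omg (Set.Ici 0))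
    (hnonneg : ∀ t, 0 ≤ t → 0 ≤ omg t)
    (hzero : ∀ t ∈ Set.Icc (0:ℝ) 1, omg t = 0)
    (hconv : ConvexOn ℝ (Set.Ici 0) (fun t => omg (Real.exp t)))
    (hphis : ∀ s : ℝ, 0 ≤ s →
      IsLUB {y : ℝ | ∃ t : ℝ, 0 ≤ t ∧ y = s * t - omg (Real.exp t)} (phis s)) :
    ∀ k : ℕ, 1 ≤ k → ∀ t : ℝ, 1 ≤ t →
      (⨅ j : ℕ, t ^ (-(j : ℝ)) * Real.exp ((k : ℝ) * phis ((j : ℝ) / (k : ℝ)))) ≤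
        Real.exp (-(k : ℝ) * omg t + Real.log t) := by
  intro k hk t ht
  have ht0 : (0:ℝ) < t := lt_of_lt_of_le one_pos ht
  have hk0 : (0:ℝ) < (k:ℝ) := by exact_mod_cast hk
  set φ := fun u : ℝ => omg (Real.exp u) with hφdef
  have hφmono : Monotone φ := fun u v huv =>
    hmono (Real.exp_pos u).le (Real.exp_pos v).le (Real.exp_le_exp.mpr huv)
  have hφnonneg : ∀ u : ℝ, 0 ≤ φ u := fun u => hnonneg _ (Real.exp_pos u).le
  have hφ0 : φ 0 = 0 := by
    simp only [hφdef, Real.exp_zero]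
    exact hzero 1 ⟨zero_le_one, le_refl 1⟩
  have hφcont : Continuous φ := by
    rw [← continuousOn_univ]
    exact hcont.comp Real.continuous_exp.continuousOn
      (fun u _ => Set.mem_Ici.mpr (Real.exp_pos u).le)
  -- phis is nonneg and monotone on [0,∞)
  have hphis_nonneg : ∀ s : ℝ, 0 ≤ s → 0 ≤ phis s := by
    intro s hs
    have h := (hphis s hs).1
    have : s * 0 - φ 0 ∈ {y : ℝ | ∃ u : ℝ, 0 ≤ u ∧ y = s * u - omg (Real.exp u)} :=
      ⟨0, le_refl 0, rfl⟩
    have := h this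
    simpa [hφ0] using this
  have hphis_mono : ∀ s s' : ℝ, 0 ≤ s → s ≤ s' → phis s ≤ phis s' := by
    intro s s' hs hss'
    refine (hphis s hs).2 ?_
    rintro y ⟨u, hu, rfl⟩
    calc s * u - omg (Real.exp u) ≤ s' * u - omg (Real.exp u) := by nlinarith
      _ ≤ phis s' := (hphis s' (hs.trans hss')).1 ⟨u, hu, rfl⟩
  -- the infimum is bounded below by 0
  have hbdd : BddBelow (Set.range fun j : ℕ =>
      t ^ (-(j : ℝ)) * Real.exp ((k : ℝ) * phis ((j : ℝ) / (k : ℝ)))) := by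
    refine ⟨0, ?_⟩
    rintro y ⟨j, rfl⟩
    exact mul_nonneg (Real.rpow_nonneg ht0.le _) (Real.exp_pos _).le
  set x := Real.log t with hxdef
  have hx0 : 0 ≤ x := Real.log_nonneg ht
  have hωt : omg t = φ x := by rw [hφdef]; simp [hxdef, Real.exp_log ht0]
  -- key estimate with a slack δ
  have key : ∀ δ : ℝ, 0 < δ →
      (⨅ j : ℕ, t ^ (-(j : ℝ)) * Real.exp ((k : ℝ) * phis ((j : ℝ) / (k : ℝ)))) ≤
        Real.exp (-(k : ℝ) * omg t + Real.log t + δ) := by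
    intro δ hδ
    rcases eq_or_lt_of_le ht with h1 | h1
    · -- t = 1 : take j = 0
      have hx : x = 0 := by rw [hxdef, ← h1, Real.log_one]
      have hphis0 : phis 0 = 0 := by
        refine le_antisymm ?_ (hphis_nonneg 0 le_rfl)
        refine (hphis 0 le_rfl).2 ?_
        rintro y ⟨u, hu, rfl⟩
        have := hφnonneg u
        simp only [zero_mul, zero_sub]
        linarith [hφnonneg u]
      have hle : (⨅ j : ℕ, t ^ (-(j : ℝ)) * Real.exp ((k : ℝ) * phis ((j : ℝ) / (k : ℝ)))) ≤
          t ^ (-(0 : ℕ) : ℝ) * Real.exp ((k : ℝ) * phis ((0 : ℕ) / (k : ℝ))) :=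
        ciInf_le hbdd 0
      have : t ^ (-(0 : ℕ) : ℝ) * Real.exp ((k : ℝ) * phis ((0 : ℕ) / (k : ℝ))) = 1 := by
        simp [hphis0]
      rw [this] at hle
      refine hle.trans ?_
      rw [← Real.exp_zero]
      apply Real.exp_le_exp.mpr
      have : omg t = 0 := by rw [← h1]; exact hzero 1 ⟨zero_le_one, le_refl 1⟩
      rw [this, ← h1, Real.log_one]
      linarith
    · -- t > 1, so x > 0
      have hxpos : 0 < x := Real.log_pos h1
      -- choose ε by continuity of φ at x
      have hδk : 0 < δ / (k : ℝ) := div_pos hδ hk0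
      obtain ⟨ε', hε', hball⟩ := Metric.continuousAt_iff.mp hφcont.continuousAt (δ / k) hδk
      set ε := min (ε' / 2) x with hεdef
      have hεpos : 0 < ε := lt_min (half_pos hε') hxpos
      have hεx : ε ≤ x := min_le_right _ _
      have hclose : φ x - φ (x - ε) ≤ δ / k := by
        have : dist (x - ε) x < ε' := by
          rw [Real.dist_eq, abs_of_nonpos (by linarith)]
          have := min_le_left (ε' / 2) x
          simp only [hεdef] at *
          linarith
        have := hball this
        rw [Real.dist_eq] at this
        have := abs_lt.mp this
        linarith [this.1]
      set m := (φ x - φ (x - ε)) / ε with hmdef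
      have hm0 : 0 ≤ m := div_nonneg (by linarith [hφmono (show x - ε ≤ x by linarith)]) hεpos.le
      -- upper bound for phis m
      have hub : phis m ≤ m * x - φ (x - ε) := by
        refine (hphis m hm0).2 ?_
        rintro y ⟨u, hu, rfl⟩
        show m * u - φ u ≤ m * x - φ (x - ε)
        rcases lt_trichotomy u (x - ε) with hc | hc | hc
        · -- u < x - ε : use slope monotonicity on u < x-ε < x
          have hslope := hconv.slope_mono_adjacent (Set.mem_Ici.mpr hu)
            (Set.mem_Ici.mpr hx0) hc (by linarith)
          -- (φ (x-ε) - φ u)/(x-ε-u) ≤ (φ x - φ (x-ε))/ε = m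
          have hden : 0 < x - ε - u := by linarith
          have : (φ (x - ε) - φ u) / (x - ε - u) ≤ m := by
            rw [hmdef]
            have hxe : x - (x - ε) = ε := by ring
            rw [hxe] at hslope; exact hslope
          have h2 : φ (x - ε) - φ u ≤ m * (x - ε - u) := by
            rw [div_le_iff₀ hden] at this
            linarith
          nlinarith
        · subst hc; nlinarith
        · rcases lt_trichotomy u x with hc2 | hc2 | hc2
          · -- x - ε < u ≤ x
            have := hφmono (show x - ε ≤ u by linarith)
            nlinarith
          · subst hc2
            have := hφmono (show x - ε ≤ x by linarith)
            nlinarith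
          · -- u > x : slope on x-ε < x < u
            have hslope := hconv.slope_mono_adjacent (Set.mem_Ici.mpr (by linarith : (0:ℝ) ≤ x - ε))
              (Set.mem_Ici.mpr hu) (by linarith : x - ε < x) hc2
            have : m ≤ (φ u - φ x) / (u - x) := by
              rw [hmdef]
              have hxe : x - (x - ε) = ε := by ring
              rw [hxe] at hslope; exact hslope
            have hden : 0 < u - x := by linarith
            have h2 : m * (u - x) ≤ φ u - φ x := by
              rw [le_div_iff₀ hden] at this
              linarith
            have := hφmono (show x - ε ≤ x by linarith)
            nlinarith
      -- choose j = ⌊k m⌋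
      set j := ⌊(k : ℝ) * m⌋₊ with hjdef
      have hjle : (j : ℝ) ≤ (k : ℝ) * m := Nat.floor_le (by positivity)
      have hjgt : (k : ℝ) * m < (j : ℝ) + 1 := Nat.lt_floor_add_one _
      have hjk0 : 0 ≤ (j : ℝ) / (k : ℝ) := by positivity
      have hjkm : (j : ℝ) / (k : ℝ) ≤ m := by
        rw [div_le_iff₀ hk0]; linarith
      have hle : (⨅ i : ℕ, t ^ (-(i : ℝ)) * Real.exp ((k : ℝ) * phis ((i : ℝ) / (k : ℝ)))) ≤
          t ^ (-(j : ℝ)) * Real.exp ((k : ℝ) * phis ((j : ℝ) / (k : ℝ))) :=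
        ciInf_le hbdd j
      refine hle.trans ?_
      have hrw : t ^ (-(j : ℝ)) * Real.exp ((k : ℝ) * phis ((j : ℝ) / (k : ℝ)))
          = Real.exp ((k : ℝ) * phis ((j : ℝ) / (k : ℝ)) - (j : ℝ) * x) := by
        rw [Real.rpow_def_of_pos ht0, ← Real.exp_add, hxdef]
        ring_nf
      rw [hrw]
      apply Real.exp_le_exp.mpr
      have hch : phis ((j : ℝ) / (k : ℝ)) ≤ m * x - φ x + δ / k := by
        have h1 := hphis_mono _ _ hjk0 hjkm
        have h2 : m * x - φ (x - ε) ≤ m * x - φ x + δ / k := by linarith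
        linarith [hub]
      have hmain : (k : ℝ) * phis ((j : ℝ) / (k : ℝ)) - (j : ℝ) * x
          ≤ -(k : ℝ) * φ x + x + δ := by
        have h3 : (k : ℝ) * phis ((j : ℝ) / (k : ℝ)) ≤ (k : ℝ) * m * x - (k : ℝ) * φ x + δ := by
          have := mul_le_mul_of_nonneg_left hch hk0.le
          calc (k : ℝ) * phis ((j : ℝ) / (k : ℝ)) ≤ (k : ℝ) * (m * x - φ x + δ / k) := this
            _ = (k : ℝ) * m * x - (k : ℝ) * φ x + δ := by field_simp
        have h4 : ((k : ℝ) * m - (j : ℝ)) * x ≤ x := by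
          calc ((k : ℝ) * m - (j : ℝ)) * x ≤ 1 * x :=
                mul_le_mul_of_nonneg_right (by linarith) hx0
            _ = x := one_mul x
        rw [sub_mul] at h4
        linarith
      rw [hωt]
      linarith
  -- conclude by letting δ → 0
  set L := -(k : ℝ) * omg t + Real.log t with hLdef
  refine le_of_forall_pos_le_add ?_
  intro ε hε
  have hexp : 0 < Real.exp L := Real.exp_pos L
  set δ := Real.log (1 + ε / Real.exp L) with hδdef
  have h1 : (1:ℝ) < 1 + ε / Real.exp L := by
    have : 0 < ε / Real.exp L := div_pos hε hexp
    linarith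
  have hδpos : 0 < δ := Real.log_pos h1
  have := key δ hδpos
  have heq : Real.exp (L + δ) = Real.exp L + ε := by
    rw [Real.exp_add, hδdef, Real.exp_log (by linarith : (0:ℝ) < 1 + ε / Real.exp L)]
    field_simp
  calc (⨅ j : ℕ, t ^ (-(j : ℝ)) * Real.exp ((k : ℝ) * phis ((j : ℝ) / (k : ℝ))))
      ≤ Real.exp (L + δ) := this
    _ = Real.exp L + ε := heq
end

section
/- Let ω : [0,∞) → [0,∞) be continuous, increasing, with ω|_{[0,1]} ≡ 0, φ(t) := ω(e^t) convex, and suppose ω(t) = o(t^a) as t → ∞ for some constant 0 < a ≤ 1. Then for every B > 0 and λ > 0 there exists a constant C > 0 such that B^n · n! ≤ C · e^{a λ φ*(n/λ)} for all n ∈ ℕ₀. -/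
theorem stmt_2 (omg phis : ℝ → ℝ)
    (hcont : ContinuousOn omg (Set.Ici 0))
    (hmono : MonotoneOn omg (Set.Ici 0))
    (hnonneg : ∀ t, 0 ≤ t → 0 ≤ omg t)
    (hzero : ∀ t ∈ Set.Icc (0:ℝ) 1, omg t = 0)
    (hconv : ConvexOn ℝ (Set.Ici 0) (fun t => omg (Real.exp t)))
    (hphis : ∀ s : ℝ, 0 ≤ s →
      IsLUB {y : ℝ | ∃ t : ℝ, 0 ≤ t ∧ y = s * t - omg (Real.exp t)} (phis s))
    (a : ℝ) (ha0 : 0 < a) (ha1 : a ≤ 1)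
    (hsmall : Filter.Tendsto (fun t : ℝ => omg t / t ^ a) Filter.atTop (nhds 0)) :
    ∀ B : ℝ, 0 < B → ∀ lam : ℝ, 0 < lam → ∃ C : ℝ, 0 < C ∧
      ∀ n : ℕ, B ^ n * (n.factorial : ℝ) ≤ C * Real.exp (a * lam * phis ((n : ℝ) / lam)) := by
  intro B hB lam hlam
  have hE1 : (0:ℝ) < Real.exp 1 := Real.exp_pos 1
  set ε : ℝ := min (1 / (Real.exp 1 * B * a * lam)) (1 / (a * lam)) with hεdef
  have hεpos : 0 < ε := lt_min (by positivity) (by positivity)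
  -- eventual bound
  obtain ⟨T, hT⟩ : ∃ T : ℝ, ∀ t ≥ T, omg t / t ^ a < ε :=
    Filter.eventually_atTop.mp (hsmall.eventually_lt_const hεpos)
  set T' : ℝ := max T 1 with hT'def
  have hT'1 : (1:ℝ) ≤ T' := le_max_right _ _
  have hT'0 : (0:ℝ) ≤ T' := le_trans zero_le_one hT'1
  set M : ℝ := omg T' with hMdef
  have hM0 : 0 ≤ M := hnonneg T' hT'0
  have hbound : ∀ t : ℝ, 0 ≤ t → omg t ≤ ε * t ^ a + M := by
    intro t ht
    rcases le_or_gt T' t with h | h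
    · have htpos : 0 < t := lt_of_lt_of_le zero_lt_one (le_trans hT'1 h)
      have h1 : omg t / t ^ a < ε := hT t (le_trans (le_max_left _ _) h)
      have h2 : (0:ℝ) < t ^ a := Real.rpow_pos_of_pos htpos a
      have : omg t < ε * t ^ a := by
        rw [div_lt_iff₀ h2] at h1; linarith
      linarith
    · have h1 : omg t ≤ M := hmono ht hT'0 h.le
      have h2 : (0:ℝ) ≤ ε * t ^ a := by positivity
      linarith
  refine ⟨Real.exp (a * lam * M), Real.exp_pos _, ?_⟩
  have hC1 : (1:ℝ) ≤ Real.exp (a * lam * M) := Real.one_le_exp (by positivity)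
  intro n
  rcases Nat.eq_zero_or_pos n with rfl | hn
  · simp only [pow_zero, Nat.factorial_zero, Nat.cast_one, one_mul, Nat.cast_zero, zero_div]
    have hphis0 : 0 ≤ phis 0 := by
      have hmem : (0:ℝ) ∈ {y : ℝ | ∃ t : ℝ, 0 ≤ t ∧ y = 0 * t - omg (Real.exp t)} :=
        ⟨0, le_rfl, by simp [Real.exp_zero, hzero 1 ⟨zero_le_one, le_rfl⟩]⟩
      exact (hphis 0 le_rfl).1 hmem
    have : (1:ℝ) ≤ Real.exp (a * lam * phis 0) := Real.one_le_exp (by positivity)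
    nlinarith
  -- main case n ≥ 1
  have hn1 : (1:ℝ) ≤ (n:ℝ) := by exact_mod_cast hn
  have hnpos : (0:ℝ) < (n:ℝ) := by linarith
  set u : ℝ := a * ε * lam with hudef
  have hu : 0 < u := by positivity
  have hu1 : u ≤ 1 := by
    have h1 : ε ≤ 1 / (a * lam) := min_le_right _ _
    calc u = (a * lam) * ε := by ring
    _ ≤ (a * lam) * (1 / (a * lam)) := by
        apply mul_le_mul_of_nonneg_left h1 (by positivity)
    _ = 1 := by field_simp
  have huB : u * (Real.exp 1 * B) ≤ 1 := by
    have h1 : ε ≤ 1 / (Real.exp 1 * B * a * lam) := min_le_left _ _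
    calc u * (Real.exp 1 * B) = (Real.exp 1 * B * a * lam) * ε := by ring
    _ ≤ (Real.exp 1 * B * a * lam) * (1 / (Real.exp 1 * B * a * lam)) := by
        apply mul_le_mul_of_nonneg_left h1 (by positivity)
    _ = 1 := by field_simp
  have hnu : (1:ℝ) ≤ (n:ℝ) / u := (le_div_iff₀ hu).2 (by nlinarith)
  have hnupos : (0:ℝ) < (n:ℝ) / u := by positivity
  set t : ℝ := Real.log ((n:ℝ) / u) / a with htdef
  have ht0 : 0 ≤ t := div_nonneg (Real.log_nonneg hnu) ha0.le
  have hat : a * t = Real.log ((n:ℝ) / u) := by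
    rw [htdef]; field_simp
  have hexpa : Real.exp t ^ a = (n:ℝ) / u := by
    rw [Real.rpow_def_of_pos (Real.exp_pos t), Real.log_exp, mul_comm, hat,
      Real.exp_log hnupos]
  have hub : (n:ℝ) / lam * t - omg (Real.exp t) ≤ phis ((n:ℝ) / lam) :=
    (hphis ((n:ℝ) / lam) (by positivity)).1 ⟨t, ht0, rfl⟩
  have homg : omg (Real.exp t) ≤ ε * ((n:ℝ) / u) + M := by
    have := hbound (Real.exp t) (Real.exp_pos t).le
    rwa [hexpa] at this
  -- lower bound on a*lam*phis
  have hkey : (n:ℝ) * Real.log ((n:ℝ) / u) - (n:ℝ) - a * lam * M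
      ≤ a * lam * phis ((n:ℝ) / lam) := by
    have h1 : (n:ℝ) / lam * t - (ε * ((n:ℝ) / u) + M) ≤ phis ((n:ℝ) / lam) := by
      linarith
    have h2 : a * lam * ((n:ℝ) / lam * t - (ε * ((n:ℝ) / u) + M))
        ≤ a * lam * phis ((n:ℝ) / lam) :=
      mul_le_mul_of_nonneg_left h1 (by positivity)
    have h3 : a * lam * ((n:ℝ) / lam * t - (ε * ((n:ℝ) / u) + M))
        = (n:ℝ) * (a * t) - (n:ℝ) - a * lam * M := by
      field_simp
      ring
    rw [h3, hat] at h2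
    exact h2
  -- conclude
  have hchain : Real.exp ((n:ℝ) * Real.log ((n:ℝ) / u) - (n:ℝ))
      ≤ Real.exp (a * lam * M) * Real.exp (a * lam * phis ((n:ℝ) / lam)) := by
    rw [← Real.exp_add]
    exact Real.exp_le_exp.2 (by linarith)
  refine le_trans ?_ hchain
  have hrw : Real.exp ((n:ℝ) * Real.log ((n:ℝ) / u) - (n:ℝ))
      = ((n:ℝ) / (u * Real.exp 1)) ^ n := by
    have : (n:ℝ) * Real.log ((n:ℝ) / u) - (n:ℝ)
        = (n:ℝ) * (Real.log ((n:ℝ) / u) - 1) := by ring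
    rw [this, Real.exp_nat_mul, Real.exp_sub, Real.exp_log hnupos, div_div]
  rw [hrw]
  have hfact : (n.factorial : ℝ) ≤ (n:ℝ) ^ n := by
    exact_mod_cast Nat.factorial_le_pow n
  calc B ^ n * (n.factorial : ℝ) ≤ B ^ n * (n:ℝ) ^ n := by
        apply mul_le_mul_of_nonneg_left hfact (by positivity)
  _ = (B * (n:ℝ)) ^ n := by rw [mul_pow]
  _ ≤ ((n:ℝ) / (u * Real.exp 1)) ^ n := by
      apply pow_le_pow_left₀ (by positivity)
      rw [le_div_iff₀ (by positivity)]
      nlinarith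
end

section
/- Let ω : [0,∞) → [0,∞) be continuous, increasing, with ω|_{[0,1]} ≡ 0 and φ(t) := ω(e^t) convex, and let L > 0 satisfy ω(e t) ≤ L(ω(t) + 1) for all t ≥ 0. Then for every y ≥ 0, every λ > 0 and every n ∈ ℕ, λ L^n φ*(y/(λ L^n)) + n y ≤ λ φ*(y/λ) + λ Σ_{j=1}^{n} L^j. -/
theorem stmt_4 (omg phis : ℝ → ℝ)
    (hcont : ContinuousOn omg (Set.Ici 0))
    (hmono : MonotoneOn omg (Set.Ici 0))
    (hnonneg : ∀ t, 0 ≤ t → 0 ≤ omg t)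
    (hzero : ∀ t ∈ Set.Icc (0:ℝ) 1, omg t = 0)
    (hconv : ConvexOn ℝ (Set.Ici 0) (fun t => omg (Real.exp t)))
    (hphis : ∀ s : ℝ, 0 ≤ s →
      IsLUB {y : ℝ | ∃ t : ℝ, 0 ≤ t ∧ y = s * t - omg (Real.exp t)} (phis s))
    (L : ℝ) (hL : 1 ≤ L) (hLom : ∀ t : ℝ, 0 ≤ t → omg (Real.exp 1 * t) ≤ L * (omg t + 1)) :
    ∀ y : ℝ, 0 ≤ y → ∀ lam : ℝ, 0 < lam → ∀ n : ℕ, 1 ≤ n →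
      lam * L ^ n * phis (y / (lam * L ^ n)) + (n : ℝ) * y ≤
        lam * phis (y / lam) + lam * ∑ j ∈ Finset.Icc 1 n, L ^ j := by
  intro y hy lam hlam n hn
  have hL0 : (0:ℝ) < L := lt_of_lt_of_le one_pos hL
  -- key inequality: L * phis (s/L) + s ≤ phis s + L for s ≥ 0
  have key : ∀ s : ℝ, 0 ≤ s → L * phis (s / L) + s ≤ phis s + L := by
    intro s hs
    have hsL : 0 ≤ s / L := div_nonneg hs hL0.le
    have h1 := hphis (s / L) hsL
    have h2 := hphis s hs
    have hub : phis (s / L) ≤ (phis s + L - s) / L := by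
      apply h1.2
      rintro z ⟨t, ht, rfl⟩
      show s / L * t - omg (Real.exp t) ≤ (phis s + L - s) / L
      rw [le_div_iff₀ hL0]
      have hphi : omg (Real.exp (t + 1)) ≤ L * (omg (Real.exp t) + 1) := by
        have h := hLom (Real.exp t) (Real.exp_pos t).le
        rwa [show Real.exp (t + 1) = Real.exp 1 * Real.exp t by
          rw [← Real.exp_add]; ring_nf]
      have hel : s * (t + 1) - omg (Real.exp (t + 1)) ≤ phis s :=
        h2.1 ⟨t + 1, by linarith, rfl⟩
      have hst : s / L * t * L = s * t := by field_simp
      nlinarith [hnonneg (Real.exp t) (Real.exp_pos t).le]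
    have h3 : L * phis (s / L) ≤ L * ((phis s + L - s) / L) :=
      mul_le_mul_of_nonneg_left hub hL0.le
    rw [mul_div_cancel₀ _ (ne_of_gt hL0)] at h3
    linarith
  induction n, hn using Nat.le_induction with
  | base =>
      have hk := key (y / lam) (div_nonneg hy hlam.le)
      have h1 : y / lam / L = y / (lam * L) := by rw [div_div]
      have h2 : lam * (y / lam) = y := by field_simp
      rw [Finset.Icc_self, Finset.sum_singleton, pow_one]
      rw [h1] at hk
      have h3 := mul_le_mul_of_nonneg_left hk hlam.le
      push_cast
      nlinarith [h3]
  | succ n hn ih =>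
      have hmu : 0 < lam * L ^ n := mul_pos hlam (pow_pos hL0 n)
      have hk := key (y / (lam * L ^ n)) (div_nonneg hy hmu.le)
      have h1 : y / (lam * L ^ n) / L = y / (lam * L ^ (n + 1)) := by
        rw [div_div, pow_succ]; ring_nf
      have h2 : lam * L ^ n * (y / (lam * L ^ n)) = y := by field_simp
      have h3 := mul_le_mul_of_nonneg_left hk hmu.le
      rw [h1] at h3
      have hsum : ∑ j ∈ Finset.Icc 1 (n + 1), L ^ j
          = (∑ j ∈ Finset.Icc 1 n, L ^ j) + L ^ (n + 1) :=
        Finset.sum_Icc_succ_top (by omega) _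
      have hstep : lam * L ^ (n + 1) * phis (y / (lam * L ^ (n + 1))) + y ≤
          lam * L ^ n * phis (y / (lam * L ^ n)) + lam * L ^ (n + 1) := by
        have e1 : lam * L ^ n * (L * phis (y / (lam * L ^ (n + 1))))
            = lam * L ^ (n + 1) * phis (y / (lam * L ^ (n + 1))) := by ring
        have e2 : lam * L ^ n * L = lam * L ^ (n + 1) := by ring
        nlinarith [h3]
      rw [hsum]
      push_cast
      nlinarith [hstep, ih]
end

section
/- Let ω : [0,∞) → [0,∞) be continuous, increasing, with ω|_{[0,1]} ≡ 0 and φ(t) := ω(e^t) convex, with Young conjugate φ*. Suppose t > 0, k ≥ 1 and N ∈ ℕ satisfy (k/N) φ*(N/k) ≤ log t ≤ (k/(N+1)) φ*((N+1)/k). Then t^{−N} e^{2k φ*(N/(2k))} ≤ e^{−k ω(t) + log t}. -/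
set_option maxHeartbeats 2000000 in
theorem stmt_6 (omg phis : ℝ → ℝ)
    (hcont : ContinuousOn omg (Set.Ici 0))
    (hmono : MonotoneOn omg (Set.Ici 0))
    (hnonneg : ∀ t, 0 ≤ t → 0 ≤ omg t)
    (hzero : ∀ t ∈ Set.Icc (0:ℝ) 1, omg t = 0)
    (hconv : ConvexOn ℝ (Set.Ici 0) (fun t => omg (Real.exp t)))
    (hphis : ∀ s : ℝ, 0 ≤ s →
      IsLUB {y : ℝ | ∃ t : ℝ, 0 ≤ t ∧ y = s * t - omg (Real.exp t)} (phis s))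
    (k N : ℕ) (hk : 1 ≤ k) (hN : 1 ≤ N) (t : ℝ) (ht : 0 < t)
    (h1 : (k : ℝ) / N * phis ((N : ℝ) / k) ≤ Real.log t)
    (h2 : Real.log t ≤ (k : ℝ) / (N + 1) * phis (((N : ℝ) + 1) / k)) :
    t ^ (-(N : ℝ)) * Real.exp (2 * (k : ℝ) * phis ((N : ℝ) / (2 * (k : ℝ)))) ≤
      Real.exp (-(k : ℝ) * omg t + Real.log t) := by
  set u := Real.log t with hu
  set f : ℝ → ℝ := fun w => omg (Real.exp w) with hf
  have hK : (1:ℝ) ≤ (k:ℝ) := by exact_mod_cast hk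
  have hM : (1:ℝ) ≤ (N:ℝ) := by exact_mod_cast hN
  have hK0 : (0:ℝ) < (k:ℝ) := by linarith
  have hM0 : (0:ℝ) < (N:ℝ) := by linarith
  have hf0 : ∀ w, 0 ≤ f w := fun w => hnonneg _ (Real.exp_pos w).le
  have homg1 : omg 1 = 0 := hzero 1 ⟨zero_le_one, le_refl 1⟩
  have hmem0 : ∀ s : ℝ, (0:ℝ) ∈ {y : ℝ | ∃ t : ℝ, 0 ≤ t ∧ y = s * t - omg (Real.exp t)} := by
    intro s
    exact ⟨0, le_refl 0, by simp [Real.exp_zero, homg1]⟩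
  have hphis0 : ∀ s : ℝ, 0 ≤ s → 0 ≤ phis s := fun s hs => (hphis s hs).1 (hmem0 s)
  have young : ∀ s w : ℝ, 0 ≤ s → 0 ≤ w → s * w - f w ≤ phis s := by
    intro s w hs hw
    exact (hphis s hs).1 ⟨w, hw, rfl⟩
  have hu0 : 0 ≤ u := by
    have h := hphis0 ((N:ℝ)/k) (by positivity)
    have : 0 ≤ (k:ℝ)/N * phis ((N:ℝ)/k) := by positivity
    linarith
  -- (★) : ∀ w ≥ 0, N w - k f w ≤ N u
  have star : ∀ w : ℝ, 0 ≤ w → (N:ℝ) * w - k * f w ≤ N * u := by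
    intro w hw
    have hy := young ((N:ℝ)/k) w (by positivity) hw
    have h1' : (k:ℝ) * phis ((N:ℝ)/k) ≤ N * u := by
      have := mul_le_mul_of_nonneg_left h1 hM0.le
      calc (k:ℝ) * phis ((N:ℝ)/k) = (N:ℝ) * ((k:ℝ)/N * phis ((N:ℝ)/k)) := by
            field_simp
        _ ≤ N * u := this
    have := mul_le_mul_of_nonneg_left hy hK0.le
    have hkey : (N:ℝ) * w - k * f w ≤ k * phis ((N:ℝ)/k) := by
      have heq : (k:ℝ) * ((N:ℝ)/k * w - f w) = (N:ℝ) * w - k * f w := by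
        field_simp
      linarith [heq ▸ this]
    linarith
  -- near-sup at slope (N+1)/k
  have hsu : ((N:ℝ)+1)/k * u ≤ phis (((N:ℝ)+1)/k) := by
    have := mul_le_mul_of_nonneg_left h2 (by positivity : (0:ℝ) ≤ ((N:ℝ)+1)/k)
    calc ((N:ℝ)+1)/k * u ≤ ((N:ℝ)+1)/k * ((k:ℝ)/((N:ℝ)+1) * phis (((N:ℝ)+1)/k)) := this
      _ = phis (((N:ℝ)+1)/k) := by field_simp
  have near : ∀ δ : ℝ, 0 < δ → ∃ w, 0 ≤ w ∧ (k:ℝ) * f w ≤ ((N:ℝ)+1) * (w - u) + k * δ := by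
    intro δ hδ
    have hlt : ((N:ℝ)+1)/k * u - δ < phis (((N:ℝ)+1)/k) := by linarith
    obtain ⟨y, ⟨w, hw, rfl⟩, hy⟩ := (lt_isLUB_iff (hphis (((N:ℝ)+1)/k) (by positivity))).mp hlt
    refine ⟨w, hw, ?_⟩
    have := mul_le_mul_of_nonneg_left hy.le hK0.le
    have heq1 : (k:ℝ) * (((N:ℝ)+1)/k * u - δ) = ((N:ℝ)+1) * u - k * δ := by
      field_simp
    have heq2 : (k:ℝ) * (((N:ℝ)+1)/k * w - omg (Real.exp w)) = ((N:ℝ)+1) * w - k * f w := by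
      simp only [hf]; field_simp
    nlinarith [this]
  have contAt : ContinuousAt f u := by
    have h1 : ContinuousAt omg (Real.exp u) :=
      hcont.continuousAt (Ici_mem_nhds (Real.exp_pos u))
    exact h1.comp Real.continuous_exp.continuousAt
  -- Lemma L
  have lemL : ∀ ε : ℝ, 0 < ε → ∃ w, u ≤ w ∧ (k:ℝ) * f w ≤ ((N:ℝ)+1) * (w - u) + ε := by
    intro ε hε
    by_contra hcontra
    push_neg at hcontra
    have hfu : f u ≤ 0 := by
      by_contra hpos
      push_neg at hpos
      -- continuity: for η = f u / 4 get δ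
      obtain ⟨δ, hδpos, hδ⟩ := Metric.continuousAt_iff.mp contAt (f u / 4) (by linarith)
      obtain ⟨δ0, hδ0pos, hδ0a, hδ0b, hδ0c⟩ :
          ∃ δ0 : ℝ, 0 < δ0 ∧ δ0 ≤ ε/(2*k) ∧ δ0 ≤ f u / 4 ∧ δ0 ≤ δ/(2*k) :=
        ⟨min (ε/(2*k)) (min (f u / 4) (δ/(2*k))),
          lt_min (by positivity) (lt_min (by linarith) (by positivity)),
          min_le_left _ _, le_trans (min_le_right _ _) (min_le_left _ _),
          le_trans (min_le_right _ _) (min_le_right _ _)⟩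
      obtain ⟨w, hw0, hwle⟩ := near δ0 hδ0pos
      have e1 : (k:ℝ) * δ0 ≤ (k:ℝ) * (ε/(2*k)) := mul_le_mul_of_nonneg_left hδ0a hK0.le
      have e1' : (k:ℝ) * (ε/(2*k)) = ε/2 := by field_simp
      have e3 : (k:ℝ) * δ0 ≤ (k:ℝ) * (δ/(2*k)) := mul_le_mul_of_nonneg_left hδ0c hK0.le
      have e3' : (k:ℝ) * (δ/(2*k)) = δ/2 := by field_simp
      have hwu : w < u := by
        by_contra hge
        push_neg at hge
        have := hcontra w hge
        linarith
      have hneg : ((N:ℝ)+1) * (w - u) ≤ 0 :=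
        mul_nonpos_iff.mpr (Or.inl ⟨by linarith, by linarith⟩)
      have hfw : f w ≤ f u / 4 := by
        have h2 : (k:ℝ) * f w ≤ k * δ0 := by linarith
        have h2' : f w ≤ δ0 := (mul_le_mul_iff_right₀ hK0).mp h2
        linarith
      have hclose : u - w < δ := by
        have hr : ((N:ℝ)+1) * (w - u) = -(((N:ℝ)+1) * (u - w)) := by ring
        have hfw0 : 0 ≤ (k:ℝ) * f w := mul_nonneg hK0.le (hf0 w)
        have h2 : ((N:ℝ)+1) * (u - w) ≤ k * δ0 := by linarith
        have h3 : 1 * (u - w) ≤ ((N:ℝ)+1) * (u - w) :=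
          mul_le_mul_of_nonneg_right (by linarith) (by linarith)
        linarith
      have hdist : dist w u < δ := by
        rw [Real.dist_eq, abs_lt]
        constructor <;> linarith
      have := hδ hdist
      rw [Real.dist_eq, abs_lt] at this
      linarith [this.1, this.2, hfw]
    have hfu0 : f u = 0 := le_antisymm hfu (hf0 u)
    have := hcontra u (le_refl u)
    rw [hfu0] at this
    simp only [sub_self, mul_zero, zero_add] at this
    linarith
  -- Lemma K : convexity bound on the left of u
  have lemK : ∀ v : ℝ, 0 ≤ v → v ≤ u → (k:ℝ) * f u ≤ k * f v + ((N:ℝ)+1) * (u - v) := by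
    intro v hv hvu
    refine le_of_forall_pos_le_add ?_
    intro ε hε
    obtain ⟨w, huw, hwle⟩ := lemL ε hε
    rcases eq_or_lt_of_le (hvu.trans huw) with heq | hlt
    · -- v = w, so v = u = w
      have hvu' : v = u := le_antisymm hvu (heq ▸ huw)
      subst hvu'
      nlinarith
    · -- v < w : convexity
      have hwv : 0 < w - v := by linarith
      set a : ℝ := (w - u)/(w - v) with ha
      set b : ℝ := (u - v)/(w - v) with hb
      have ha0 : 0 ≤ a := by apply div_nonneg <;> linarith
      have hb0 : 0 ≤ b := by apply div_nonneg <;> linarith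
      have hab : a + b = 1 := by
        rw [ha, hb, ← add_div, div_eq_one_iff_eq hwv.ne']; ring
      have hcomb : a * v + b * w = u := by
        rw [ha, hb]
        field_simp
        ring
      have hcv := hconv.2 (show v ∈ Set.Ici (0:ℝ) from hv)
        (show w ∈ Set.Ici (0:ℝ) from le_trans hv hlt.le) ha0 hb0 hab
      simp only [smul_eq_mul, hcomb] at hcv
      -- hcv : f u ≤ a * f v + b * f w
      have hb1 : b ≤ 1 := by
        rw [hb, div_le_one hwv]; linarith
      have ha1 : a ≤ 1 := by linarith
      have hbw : b * (w - u) ≤ u - v := by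
        have : b * (w - u) = (u - v) * ((w - u)/(w - v)) := by rw [hb]; ring
        rw [this]
        have h01 : (w - u)/(w - v) ≤ 1 := by
          rw [div_le_one hwv]; linarith
        have := mul_le_mul_of_nonneg_left h01 (show (0:ℝ) ≤ u - v by linarith)
        linarith
      have hkfw : (k:ℝ) * f w ≤ ((N:ℝ)+1) * (w - u) + ε := hwle
      -- k f u ≤ a k f v + b k f w ≤ k f v + (N+1) b (w-u) + b ε
      have h4 := mul_le_mul_of_nonneg_left hcv hK0.le
      have h5 := mul_le_mul_of_nonneg_left hkfw hb0
      have h6 : a * ((k:ℝ) * f v) ≤ 1 * ((k:ℝ) * f v) :=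
        mul_le_mul_of_nonneg_right ha1 (mul_nonneg hK0.le (hf0 v))
      have h7 : b * ε ≤ 1 * ε := mul_le_mul_of_nonneg_right hb1 hε.le
      have h8 : ((N:ℝ)+1) * (b * (w - u)) ≤ ((N:ℝ)+1) * (u - v) :=
        mul_le_mul_of_nonneg_left hbw (by linarith)
      have e1 : (k:ℝ) * (a * f v + b * f w) = a * ((k:ℝ) * f v) + b * ((k:ℝ) * f w) := by
        ring
      have e2 : b * (((N:ℝ)+1) * (w - u) + ε) = ((N:ℝ)+1) * (b * (w - u)) + b * ε := by
        ring
      linarith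
  -- main pointwise bound
  have mainb : ∀ v : ℝ, 0 ≤ v → (N:ℝ) * v + k * f u ≤ ((N:ℝ)+1) * u + 2 * k * f v := by
    intro v hv
    rcases le_or_gt u v with hcase | hcase
    · have hst := star v hv
      have hmono' : f u ≤ f v := hmono (Set.mem_Ici.mpr (Real.exp_pos u).le)
        (Set.mem_Ici.mpr (Real.exp_pos v).le) (Real.exp_le_exp.mpr hcase)
      have hkf : (k:ℝ) * f u ≤ (k:ℝ) * f v := mul_le_mul_of_nonneg_left hmono' hK0.le
      have hkv : 0 ≤ (k:ℝ) * f v := mul_nonneg hK0.le (hf0 v)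
      linarith
    · have hlk := lemK v hv hcase.le
      have e : ((N:ℝ)+1) * (u - v) = (N:ℝ)*u + u - (N:ℝ)*v - v := by ring
      have hkv : 0 ≤ (k:ℝ) * f v := mul_nonneg hK0.le (hf0 v)
      linarith
  -- upper bound on phis (N/(2k))
  have ub : phis ((N:ℝ)/(2*(k:ℝ))) ≤ (((N:ℝ)+1) * u - k * f u)/(2*k) := by
    apply (hphis ((N:ℝ)/(2*(k:ℝ))) (by positivity)).2
    rintro y ⟨v, hv, rfl⟩
    rw [le_div_iff₀ (by positivity : (0:ℝ) < 2*(k:ℝ))]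
    have := mainb v hv
    have heq : ((N:ℝ)/(2*(k:ℝ)) * v - omg (Real.exp v)) * (2*(k:ℝ))
        = (N:ℝ) * v - 2*(k:ℝ) * f v := by
      simp only [hf]; field_simp
    rw [heq]
    linarith
  have final : 2 * (k:ℝ) * phis ((N:ℝ)/(2*(k:ℝ))) ≤ ((N:ℝ)+1) * u - k * f u := by
    have := mul_le_mul_of_nonneg_left ub (by positivity : (0:ℝ) ≤ 2*(k:ℝ))
    calc 2*(k:ℝ) * phis ((N:ℝ)/(2*(k:ℝ)))
        ≤ 2*(k:ℝ) * ((((N:ℝ)+1) * u - k * f u)/(2*k)) := this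
      _ = ((N:ℝ)+1) * u - k * f u := by field_simp
  -- conclude
  have homgt : omg t = f u := by
    simp only [hf, hu, Real.exp_log ht]
  rw [Real.rpow_def_of_pos ht, ← Real.exp_add, Real.exp_le_exp, homgt]
  have : Real.log t = u := rfl
  rw [this]
  nlinarith [final]
end

section
/- Let 0 < a ≤ 1 and let ω, σ be weight functions (continuous, increasing, vanishing on [0,1], with φ_ω(t) := ω(e^t) and φ_σ(t) := σ(e^t) convex). If ω(t^{1/a}) = O(σ(t)) as t → ∞, then there exists C > 0 such that for every λ > 0 and every j ∈ ℕ₀, λ φ_σ*(j/λ) ≤ λ + a λ C φ_ω*(j/(λC)). -/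
theorem stmt_8 (omg phiom sig phisig : ℝ → ℝ)
    (hcont : ContinuousOn omg (Set.Ici 0))
    (hmono : MonotoneOn omg (Set.Ici 0))
    (hnonneg : ∀ t, 0 ≤ t → 0 ≤ omg t)
    (hzero : ∀ t ∈ Set.Icc (0:ℝ) 1, omg t = 0)
    (hconv : ConvexOn ℝ (Set.Ici 0) (fun t => omg (Real.exp t)))
    (hphiom : ∀ s : ℝ, 0 ≤ s →
      IsLUB {y : ℝ | ∃ t : ℝ, 0 ≤ t ∧ y = s * t - omg (Real.exp t)} (phiom s))
    (hcont : ContinuousOn sig (Set.Ici 0))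
    (hmono : MonotoneOn sig (Set.Ici 0))
    (hnonneg : ∀ t, 0 ≤ t → 0 ≤ sig t)
    (hzero : ∀ t ∈ Set.Icc (0:ℝ) 1, sig t = 0)
    (hconv : ConvexOn ℝ (Set.Ici 0) (fun t => sig (Real.exp t)))
    (hphisig : ∀ s : ℝ, 0 ≤ s →
      IsLUB {y : ℝ | ∃ t : ℝ, 0 ≤ t ∧ y = s * t - sig (Real.exp t)} (phisig s))
    (a : ℝ) (ha0 : 0 < a) (ha1 : a ≤ 1)
    (hbig : ∃ A : ℝ, 0 < A ∧ ∃ B : ℝ, 0 < B ∧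
      ∀ t : ℝ, 0 ≤ t → omg (t ^ (1 / a)) ≤ A * sig t + B) :
    ∃ C : ℝ, 0 < C ∧ ∀ lam : ℝ, 0 < lam → ∀ j : ℕ,
      lam * phisig ((j : ℝ) / lam) ≤ lam + a * lam * C * phiom ((j : ℝ) / (lam * C)) := by
  obtain ⟨A, hA, B, hB, hAB⟩ := hbig
  set A' : ℝ := max A B with hA'def
  have hA' : 0 < A' := lt_of_lt_of_le hA (le_max_left _ _)
  have hkey : ∀ t : ℝ, 0 ≤ t → omg (t ^ (1 / a)) ≤ A' * sig t + A' := by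
    intro t ht
    have h1 := hAB t ht
    have h2 : A * sig t ≤ A' * sig t :=
      mul_le_mul_of_nonneg_right (le_max_left _ _) (hnonneg t ht)
    have h3 : B ≤ A' := le_max_right _ _
    linarith
  refine ⟨1 / (a * A'), by positivity, ?_⟩
  intro lam hlam j
  set s : ℝ := (j : ℝ) / lam with hs_def
  have hs : 0 ≤ s := by positivity
  have hs' : 0 ≤ a * A' * s := by positivity
  have hbound : phisig s ≤ (1 / A') * phiom (a * A' * s) + 1 := by
    apply (hphisig s hs).2
    rintro y ⟨t, ht0, rfl⟩
    have hexp : Real.exp t ^ (1 / a) = Real.exp (t / a) := by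
      rw [Real.rpow_def_of_pos (Real.exp_pos t), Real.log_exp]
      ring_nf
    have h1 : omg (Real.exp (t / a)) ≤ A' * sig (Real.exp t) + A' := by
      have := hkey (Real.exp t) (Real.exp_pos t).le
      rwa [hexp] at this
    have h2 : (a * A' * s) * (t / a) - omg (Real.exp (t / a)) ≤ phiom (a * A' * s) := by
      exact (hphiom _ hs').1 ⟨t / a, by positivity, rfl⟩
    have ha : a ≠ 0 := ne_of_gt ha0
    have heq : (a * A' * s) * (t / a) = A' * (s * t) := by field_simp
    rw [heq] at h2
    have h3 : A' * (s * t - sig (Real.exp t)) ≤ phiom (a * A' * s) + A' := by nlinarith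
    have h4 : s * t - sig (Real.exp t) ≤ (phiom (a * A' * s) + A') / A' := by
      rw [le_div_iff₀ hA']; nlinarith
    have h5 : (phiom (a * A' * s) + A') / A' = (1 / A') * phiom (a * A' * s) + 1 := by
      field_simp
    linarith
  have hCeq : (j : ℝ) / (lam * (1 / (a * A'))) = a * A' * s := by
    rw [hs_def]
    field_simp
  have hc : a * lam * (1 / (a * A')) = lam / A' := by
    field_simp
  calc lam * phisig s ≤ lam * ((1 / A') * phiom (a * A' * s) + 1) :=
        mul_le_mul_of_nonneg_left hbound hlam.le
    _ = lam + a * lam * (1 / (a * A')) * phiom ((j:ℝ) / (lam * (1 / (a * A')))) := by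
        rw [hCeq, hc]; ring
end

section
/- Let ω and a be as follows: ω : [0,∞) → [0,∞) continuous, increasing, ω|_{[0,1]} ≡ 0, φ(t) := ω(e^t) convex with Young conjugate φ*, and suppose a : ℝ^{2d} → ℂ is smooth and belongs to GS^{m,ω}_ρ for every m ∈ ℝ, i.e., for every m ∈ ℝ and n ∈ ℕ there is E > 0 with |D_x^α D_ξ^β a(x,ξ)| ≤ E ⟨(x,ξ)⟩^{−ρ|α+β|} e^{nρ φ*(|α+β|/n)} e^{m ω(x)} e^{m ω(ξ)} for all x, ξ, α, β. Assume additionally there is C > 0 with ω(⟨(x,ξ)⟩) ≤ C + Cω(x) + Cω(ξ) and ⟨(x,ξ)⟩^N e^{−nω(⟨(x,ξ)⟩)} ≤ e^{n φ*(N/n)}. Then for every m ∈ ℝ and every n ∈ ℕ there is C_n > 0 such that |D_x^α D_ξ^β a(x,ξ)| ≤ C_n ⟨(x,ξ)⟩^{−ρ(|α+β|+N)} e^{ρ n φ*((|α+β|+N)/n)} e^{m(ω(x)+ω(ξ))} for all x, ξ ∈ ℝ^d, all multi-indices α, β, and all N ∈ ℕ; that is, a ∼ 0 in FGS^{m,ω}_ρ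 for every m. -/
open scoped BigOperators

/-- Directional derivative of a complex-valued function along `v`. -/
noncomputable def pd {E : Type*} [NormedAddCommGroup E] [NormedSpace ℝ E]
    (v : E) (f : E → ℂ) : E → ℂ :=
  fun x => fderiv ℝ f x v

/-- Iterated directional derivative along a list of directions. -/
noncomputable def mderiv {E : Type*} [NormedAddCommGroup E] [NormedSpace ℝ E]
    (vs : List E) (f : E → ℂ) : E → ℂ :=
  vs.foldr pd f

/-- The list of directions encoding `D_x^α D_ξ^β` on `ℝ^d × ℝ^d`. -/
noncomputable def dirList (d : ℕ) (alpha beta : Fin d → ℕ) :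
    List (EuclideanSpace ℝ (Fin d) × EuclideanSpace ℝ (Fin d)) :=
  (List.ofFn fun i =>
      List.replicate (alpha i) ((EuclideanSpace.single i (1 : ℝ), (0 : EuclideanSpace ℝ (Fin d))))).flatten ++
  (List.ofFn fun i =>
      List.replicate (beta i) (((0 : EuclideanSpace ℝ (Fin d)), EuclideanSpace.single i (1 : ℝ)))).flatten

theorem stmt_18 (d : ℕ) (hd : 1 ≤ d) (omg phis : ℝ → ℝ)
    (hcont : ContinuousOn omg (Set.Ici 0))
    (hmono : MonotoneOn omg (Set.Ici 0))
    (hnonneg : ∀ t, 0 ≤ t → 0 ≤ omg t)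
    (hzero : ∀ t ∈ Set.Icc (0:ℝ) 1, omg t = 0)
    (hconv : ConvexOn ℝ (Set.Ici 0) (fun t => omg (Real.exp t)))
    (hphis : ∀ s : ℝ, 0 ≤ s →
      IsLUB {y : ℝ | ∃ t : ℝ, 0 ≤ t ∧ y = s * t - omg (Real.exp t)} (phis s))
    (rho : ℝ) (hrho0 : 0 < rho) (hrho1 : rho ≤ 1)
    (a : EuclideanSpace ℝ (Fin d) × EuclideanSpace ℝ (Fin d) → ℂ)
    (hsmooth : ContDiff ℝ (⊤ : ℕ∞) a)
    (hsym : ∀ m : ℝ, ∀ n : ℕ, 1 ≤ n → ∃ E : ℝ, 0 < E ∧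
      ∀ (alpha beta : Fin d → ℕ) (x xi : EuclideanSpace ℝ (Fin d)),
        ‖mderiv (dirList d alpha beta) a (x, xi)‖ ≤
          E * Real.sqrt (1 + ‖x‖ ^ 2 + ‖xi‖ ^ 2) ^
              (-(rho * ((∑ i, alpha i + ∑ i, beta i : ℕ) : ℝ))) *
            Real.exp ((n : ℝ) * rho * phis (((∑ i, alpha i + ∑ i, beta i : ℕ) : ℝ) / (n : ℝ))) *
            Real.exp (m * omg ‖x‖) * Real.exp (m * omg ‖xi‖))
    (hbra : ∃ C : ℝ, 0 < C ∧ ∀ x xi : EuclideanSpace ℝ (Fin d),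
      omg (Real.sqrt (1 + ‖x‖ ^ 2 + ‖xi‖ ^ 2)) ≤ C + C * omg ‖x‖ + C * omg ‖xi‖)
    (hpow : ∀ (n N : ℕ), 1 ≤ n → ∀ x xi : EuclideanSpace ℝ (Fin d),
      Real.sqrt (1 + ‖x‖ ^ 2 + ‖xi‖ ^ 2) ^ ((N : ℕ) : ℝ) *
          Real.exp (-(n : ℝ) * omg (Real.sqrt (1 + ‖x‖ ^ 2 + ‖xi‖ ^ 2))) ≤
        Real.exp ((n : ℝ) * phis ((N : ℝ) / (n : ℝ)))) :
    ∀ m : ℝ, ∀ n : ℕ, 1 ≤ n → ∃ C : ℝ, 0 < C ∧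
      ∀ (alpha beta : Fin d → ℕ) (N : ℕ) (x xi : EuclideanSpace ℝ (Fin d)),
        ‖mderiv (dirList d alpha beta) a (x, xi)‖ ≤
          C * Real.sqrt (1 + ‖x‖ ^ 2 + ‖xi‖ ^ 2) ^
              (-(rho * ((∑ i, alpha i + ∑ i, beta i + N : ℕ) : ℝ))) *
            Real.exp (rho * (n : ℝ) * phis (((∑ i, alpha i + ∑ i, beta i + N : ℕ) : ℝ) / (n : ℝ))) *
            Real.exp (m * (omg ‖x‖ + omg ‖xi‖)) := by
  -- superadditivity of phis
  have hphi0 : phis 0 = 0 := by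
    have h := hphis 0 le_rfl
    have hmem : (0:ℝ) ∈ {y : ℝ | ∃ t : ℝ, 0 ≤ t ∧ y = 0 * t - omg (Real.exp t)} := by
      refine ⟨0, le_rfl, ?_⟩
      simp [Real.exp_zero, hzero 1 (by norm_num)]
    have hub : (0:ℝ) ∈ upperBounds {y : ℝ | ∃ t : ℝ, 0 ≤ t ∧ y = 0 * t - omg (Real.exp t)} := by
      rintro y ⟨t, ht, rfl⟩
      have := hnonneg (Real.exp t) (Real.exp_nonneg t)
      linarith
    exact le_antisymm (h.2 hub) (h.1 hmem)
  have hsuper : ∀ s t : ℝ, 0 ≤ s → 0 ≤ t → phis s + phis t ≤ phis (s + t) := by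
    intro s t hs ht
    rcases eq_or_lt_of_le (by linarith : (0:ℝ) ≤ s + t) with hc | hc
    · have hs0 : s = 0 := by linarith
      have ht0 : t = 0 := by linarith
      simp [hs0, ht0, hphi0]
    · have key : ∀ u : ℝ, 0 ≤ u → u ≤ s + t → phis u ≤ (u / (s + t)) * phis (s + t) := by
        intro u hu hust
        have hub : (u / (s + t)) * phis (s + t) ∈
            upperBounds {y : ℝ | ∃ r : ℝ, 0 ≤ r ∧ y = u * r - omg (Real.exp r)} := by
          rintro y ⟨r, hr, rfl⟩
          have h1 : (s + t) * r - omg (Real.exp r) ≤ phis (s + t) :=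
            (hphis (s + t) hc.le).1 ⟨r, hr, rfl⟩
          have h2 : 0 ≤ omg (Real.exp r) := hnonneg _ (Real.exp_nonneg r)
          have hμ0 : 0 ≤ u / (s + t) := div_nonneg hu hc.le
          have hμ1 : u / (s + t) ≤ 1 := (div_le_one hc).mpr hust
          have hu' : u = (u / (s + t)) * (s + t) := by field_simp
          nlinarith [mul_le_mul_of_nonneg_left h1 hμ0]
        exact (hphis u hu).2 hub
      have h1 := key s hs (by linarith)
      have h2 := key t ht (by linarith)
      have hsum : s / (s + t) * phis (s + t) + t / (s + t) * phis (s + t) = phis (s + t) := by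
        field_simp
      linarith
  intro m n hn
  obtain ⟨Cb, hCb0, hbra'⟩ := hbra
  obtain ⟨E, hE0, hE'⟩ := hsym (m - rho * n * Cb) n hn
  refine ⟨E * Real.exp (rho * n * Cb), by positivity, ?_⟩
  intro alpha beta N x xi
  set k : ℕ := ∑ i, alpha i + ∑ i, beta i with hk
  set s : ℝ := Real.sqrt (1 + ‖x‖ ^ 2 + ‖xi‖ ^ 2) with hs
  have hn0 : (0:ℝ) < n := by exact_mod_cast hn
  have harg : (1:ℝ) ≤ 1 + ‖x‖ ^ 2 + ‖xi‖ ^ 2 := by nlinarith [sq_nonneg ‖x‖, sq_nonneg ‖xi‖]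
  have hs1 : 1 ≤ s := by
    have := Real.sqrt_le_sqrt harg
    rw [Real.sqrt_one] at this
    rw [hs]; exact this
  have hs0 : 0 < s := lt_of_lt_of_le one_pos hs1
  have hox : 0 ≤ omg ‖x‖ := hnonneg _ (norm_nonneg x)
  have hoxi : 0 ≤ omg ‖xi‖ := hnonneg _ (norm_nonneg xi)
  have hos : 0 ≤ omg s := hnonneg _ hs0.le
  have h1 := hE' alpha beta x xi
  rw [← hk, ← hs] at h1
  have h3 := hbra' x xi
  rw [← hs] at h3
  have hρn : (0:ℝ) ≤ rho * n := by positivity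
  have h4 : phis ((k:ℝ)/n) + phis ((N:ℝ)/n) ≤ phis (((k + N : ℕ):ℝ)/n) := by
    have := hsuper ((k:ℝ)/n) ((N:ℝ)/n) (by positivity) (by positivity)
    have heq : ((k + N : ℕ):ℝ)/n = (k:ℝ)/n + (N:ℝ)/n := by push_cast; ring
    rw [heq]; exact this
  have hsN : s ^ ((N:ℕ):ℝ) ≤ Real.exp ((n:ℝ) * phis ((N:ℝ)/n) + (n:ℝ) * omg s) := by
    have hp := hpow n N hn x xi
    rw [← hs] at hp
    calc s ^ ((N:ℕ):ℝ)
        = s ^ ((N:ℕ):ℝ) * Real.exp (-(n:ℝ) * omg s) * Real.exp ((n:ℝ) * omg s) := by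
          rw [mul_assoc, ← Real.exp_add]
          simp
      _ ≤ Real.exp ((n:ℝ) * phis ((N:ℝ)/n)) * Real.exp ((n:ℝ) * omg s) :=
          mul_le_mul_of_nonneg_right hp (Real.exp_nonneg _)
      _ = Real.exp ((n:ℝ) * phis ((N:ℝ)/n) + (n:ℝ) * omg s) := (Real.exp_add _ _).symm
  have h2 : s ^ (rho * ((N:ℕ):ℝ)) ≤
      Real.exp (rho * ((n:ℝ) * phis ((N:ℝ)/n) + (n:ℝ) * omg s)) := by
    have heq : s ^ (rho * ((N:ℕ):ℝ)) = (s ^ ((N:ℕ):ℝ)) ^ rho := by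
      rw [← Real.rpow_mul hs0.le, mul_comm]
    rw [heq]
    calc (s ^ ((N:ℕ):ℝ)) ^ rho
        ≤ (Real.exp ((n:ℝ) * phis ((N:ℝ)/n) + (n:ℝ) * omg s)) ^ rho :=
          Real.rpow_le_rpow (Real.rpow_nonneg hs0.le _) hsN hrho0.le
      _ = Real.exp (rho * ((n:ℝ) * phis ((N:ℝ)/n) + (n:ℝ) * omg s)) := by
          rw [← Real.exp_mul, mul_comm]
  have hsplit : s ^ (-(rho * ((k:ℕ):ℝ))) =
      s ^ (-(rho * ((k + N : ℕ):ℝ))) * s ^ (rho * ((N:ℕ):ℝ)) := by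
    rw [← Real.rpow_add hs0]
    congr 1
    push_cast; ring
  have hPpos : 0 < s ^ (-(rho * ((k + N : ℕ):ℝ))) := Real.rpow_pos_of_pos hs0 _
  have key : rho * ((n:ℝ) * phis ((N:ℝ)/n) + (n:ℝ) * omg s) +
      ((n:ℝ) * rho * phis ((k:ℝ)/n) + (m - rho * n * Cb) * omg ‖x‖
        + (m - rho * n * Cb) * omg ‖xi‖) ≤
      rho * (n:ℝ) * Cb + rho * (n:ℝ) * phis (((k + N : ℕ):ℝ)/n)
        + m * (omg ‖x‖ + omg ‖xi‖) := by
    nlinarith [mul_le_mul_of_nonneg_left h3 hρn, mul_le_mul_of_nonneg_left h4 hρn]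
  calc ‖mderiv (dirList d alpha beta) a (x, xi)‖
      ≤ E * s ^ (-(rho * ((k:ℕ):ℝ))) *
          Real.exp ((n:ℝ) * rho * phis ((k:ℝ)/n)) *
          Real.exp ((m - rho * n * Cb) * omg ‖x‖) *
          Real.exp ((m - rho * n * Cb) * omg ‖xi‖) := h1
    _ = E * (s ^ (-(rho * ((k + N : ℕ):ℝ))) * s ^ (rho * ((N:ℕ):ℝ))) *
          Real.exp ((n:ℝ) * rho * phis ((k:ℝ)/n) + (m - rho * n * Cb) * omg ‖x‖
            + (m - rho * n * Cb) * omg ‖xi‖) := by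
        rw [hsplit]; simp only [Real.exp_add]; ring
    _ ≤ E * (s ^ (-(rho * ((k + N : ℕ):ℝ))) *
          Real.exp (rho * ((n:ℝ) * phis ((N:ℝ)/n) + (n:ℝ) * omg s))) *
          Real.exp ((n:ℝ) * rho * phis ((k:ℝ)/n) + (m - rho * n * Cb) * omg ‖x‖
            + (m - rho * n * Cb) * omg ‖xi‖) := by
        gcongr
    _ = E * s ^ (-(rho * ((k + N : ℕ):ℝ))) *
          Real.exp (rho * ((n:ℝ) * phis ((N:ℝ)/n) + (n:ℝ) * omg s)
            + ((n:ℝ) * rho * phis ((k:ℝ)/n) + (m - rho * n * Cb) * omg ‖x‖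
              + (m - rho * n * Cb) * omg ‖xi‖)) := by
        simp only [Real.exp_add]; ring
    _ ≤ E * s ^ (-(rho * ((k + N : ℕ):ℝ))) *
          Real.exp (rho * (n:ℝ) * Cb + rho * (n:ℝ) * phis (((k + N : ℕ):ℝ)/n)
            + m * (omg ‖x‖ + omg ‖xi‖)) := by
        gcongr
    _ = E * Real.exp (rho * (n:ℝ) * Cb) * s ^ (-(rho * ((k + N : ℕ):ℝ))) *
          Real.exp (rho * (n:ℝ) * phis (((k + N : ℕ):ℝ)/n)) *
          Real.exp (m * (omg ‖x‖ + omg ‖xi‖)) := by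
        simp only [Real.exp_add]; ring
end
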